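/- For probability mass functions p, p_r on a finite set with p absolutely continuous w.r.t. p_r, and any nonnegative function X, Σ_s |p(s) − p_r(s)| X(s) ≤ sqrt(d_{KL}(p, p_r)) · sqrt((4/3) E_{p_r}[X²] + (2/3) E_p[X²]), where d_{KL}(p, p_r) = Σ_{s: p_r(s)>0} p(s) log(p(s)/p_r(s)). -/

import Mathlib

/-!
Write `φ(x) = x log x + 1 - x` (Mathlib's `klFun`), so that
`d_KL(p, p_r) = ∑ p_r(s) φ(p(s)/p_r(s))`. The elementary inequality
`3 (x - 1)² ≤ (2x + 4) φ(x)` for `x ≥ 0` (the difference is convex on `(0, ∞)`, with a critical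
point at `1`) gives, after scaling by `p_r(s)²`,
`|p(s) - p_r(s)|² ≤ p_r(s) φ(p(s)/p_r(s)) · (2 p(s) + 4 p_r(s)) / 3`.
Multiplying by `X(s)²` and summing, Cauchy–Schwarz yields the bound.
-/

open Real Set InformationTheory

lemma hasDerivAt_mul_klFun_sub_sq {x : ℝ} (hx : 0 < x) :
    HasDerivAt (fun x : ℝ ↦ (2 * x + 4) * klFun x - 3 * (x - 1) ^ 2)
      (4 * ((x + 1) * log x - 2 * (x - 1))) x := by
  refine ((((hasDerivAt_id x).const_mul 2).add_const 4).mul (hasDerivAt_klFun hx.ne')).sub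
    ((((hasDerivAt_id x).sub_const 1).pow 2).const_mul 3) |>.congr_deriv ?_
  simp only [klFun_apply, id]
  ring

lemma convexOn_mul_klFun_sub_sq :
    ConvexOn ℝ (Ioi 0) (fun x : ℝ ↦ (2 * x + 4) * klFun x - 3 * (x - 1) ^ 2) := by
  refine convexOn_of_hasDerivWithinAt2_nonneg (convex_Ioi 0)
    (fun x hx ↦ (hasDerivAt_mul_klFun_sub_sq hx).continuousAt.continuousWithinAt)
    (f' := fun x ↦ 4 * ((x + 1) * log x - 2 * (x - 1))) (f'' := fun x ↦ 4 * (log x + x⁻¹ - 1))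
    ?_ ?_ ?_ <;> simp only [interior_Ioi]
  · exact fun x hx ↦ (hasDerivAt_mul_klFun_sub_sq hx).hasDerivWithinAt
  · intro x (hx : 0 < x)
    refine HasDerivAt.hasDerivWithinAt ?_
    refine (((hasDerivAt_id x).add_const 1).mul (hasDerivAt_log hx.ne') |>.sub
      (((hasDerivAt_id x).sub_const 1).const_mul 2)).const_mul 4 |>.congr_deriv ?_
    simp only [id]
    field_simp
    ring
  · intro x (hx : 0 < x)
    linarith [one_sub_inv_le_log_of_pos hx]

lemma three_mul_sq_sub_one_le_mul_klFun {x : ℝ} (hx : 0 ≤ x) :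
    3 * (x - 1) ^ 2 ≤ (2 * x + 4) * klFun x := by
  rcases hx.eq_or_lt with rfl | hx
  · norm_num [klFun_zero]
  have hmin : IsMinOn (fun x : ℝ ↦ (2 * x + 4) * klFun x - 3 * (x - 1) ^ 2) (Ioi 0) 1 := by
    refine convexOn_mul_klFun_sub_sq.isMinOn_of_rightDeriv_eq_zero (by simp) ?_
    simpa using (hasDerivAt_mul_klFun_sub_sq one_pos).hasDerivWithinAt.derivWithin
      (uniqueDiffWithinAt_Ioi 1)
  have := hmin (show x ∈ Ioi 0 from hx)
  simp only [klFun_one, mem_ofPred_eq] at this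
  linarith

lemma three_mul_sq_sub_le_mul_klFun_div {a b : ℝ} (ha : 0 ≤ a) (hb : 0 ≤ b)
    (hab : b = 0 → a = 0) :
    3 * (a - b) ^ 2 ≤ (2 * a + 4 * b) * (b * klFun (a / b)) := by
  rcases hb.eq_or_lt with rfl | hb
  · simp [hab rfl]
  obtain ⟨x, hx, rfl⟩ : ∃ x, 0 ≤ x ∧ a = x * b := ⟨a / b, by positivity, by field_simp⟩
  calc 3 * (x * b - b) ^ 2 = b ^ 2 * (3 * (x - 1) ^ 2) := by ring
    _ ≤ b ^ 2 * ((2 * x + 4) * klFun x) :=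
      mul_le_mul_of_nonneg_left (three_mul_sq_sub_one_le_mul_klFun hx) (sq_nonneg b)
    _ = (2 * (x * b) + 4 * b) * (b * klFun (x * b / b)) := by
      rw [mul_div_cancel_right₀ x hb.ne']
      ring

lemma sum_mul_klFun_div {ι : Type*} (s : Finset ι) {p q : ι → ℝ}
    (hpq : ∀ i, q i = 0 → p i = 0) :
    ∑ i ∈ s, q i * klFun (p i / q i)
      = ∑ i ∈ s, p i * log (p i / q i) + ∑ i ∈ s, q i - ∑ i ∈ s, p i := by
  rw [← Finset.sum_add_distrib, ← Finset.sum_sub_distrib]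
  refine Finset.sum_congr rfl fun i _ ↦ ?_
  by_cases hq : q i = 0
  · simp [hq, hpq i hq]
  · rw [klFun_apply]
    field_simp

lemma Real.sum_le_sqrt_mul_sqrt_of_sq_le_mul {ι : Type*} (s : Finset ι) {u f g : ι → ℝ}
    (hf : ∀ i, 0 ≤ f i) (hg : ∀ i, 0 ≤ g i) (hu : ∀ i ∈ s, u i ^ 2 ≤ f i * g i) :
    ∑ i ∈ s, u i ≤ √(∑ i ∈ s, f i) * √(∑ i ∈ s, g i) := by
  refine le_trans (Finset.sum_le_sum fun i hi ↦ ?_) (sum_sqrt_mul_sqrt_le s hf hg)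
  rw [← sqrt_mul (hf i)]
  exact le_sqrt_of_sq_le (hu i hi)

theorem stmt13_general {α : Type*} [Fintype α]
    (p pr : α → ℝ) (X : α → ℝ)
    (hp : ∀ s, 0 ≤ p s) (hpr : ∀ s, 0 ≤ pr s)
    (hps : ∑ s : α, p s = 1) (hprs : ∑ s : α, pr s = 1)
    (habs : ∀ s, pr s = 0 → p s = 0) :
    ∑ s : α, |p s - pr s| * X s
      ≤ Real.sqrt (∑ s : α, p s * Real.log (p s / pr s))
        * Real.sqrt ((4 / 3) * (∑ s : α, pr s * X s ^ 2)
            + (2 / 3) * (∑ s : α, p s * X s ^ 2)) := by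
  have hpointwise : ∀ s ∈ Finset.univ, (|p s - pr s| * X s) ^ 2
      ≤ pr s * klFun (p s / pr s) * ((2 * p s + 4 * pr s) / 3 * X s ^ 2) := fun s _ ↦ by
    have := three_mul_sq_sub_le_mul_klFun_div (hp s) (hpr s) (habs s)
    rw [mul_pow, sq_abs]
    nlinarith [sq_nonneg (X s)]
  have hkl : ∑ s, pr s * klFun (p s / pr s) = ∑ s, p s * log (p s / pr s) := by
    rw [sum_mul_klFun_div _ habs, hps, hprs, add_sub_cancel_right]
  have hweight : ∑ s, (2 * p s + 4 * pr s) / 3 * X s ^ 2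
      = 4 / 3 * ∑ s, pr s * X s ^ 2 + 2 / 3 * ∑ s, p s * X s ^ 2 := by
    rw [Finset.mul_sum, Finset.mul_sum, ← Finset.sum_add_distrib]
    exact Finset.sum_congr rfl fun s _ ↦ by ring
  rw [← hkl, ← hweight]
  refine sum_le_sqrt_mul_sqrt_of_sq_le_mul _ (fun s ↦ ?_) (fun s ↦ ?_) hpointwise
  · exact mul_nonneg (hpr s) (klFun_nonneg (div_nonneg (hp s) (hpr s)))
  · have := hp s; have := hpr s; positivity

/-- Pinsker-type bound via the Kullback–Leibler divergence: for pmfs `p, p_r`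
on a finite set with `p` absolutely continuous w.r.t. `p_r`, and any nonnegative `X`,
`∑_s |p(s) - p_r(s)| X(s) ≤ sqrt(d_KL(p, p_r)) * sqrt((4/3) E_{p_r}[X²] + (2/3) E_p[X²])`. -/
theorem stmt13 {α : Type*} [Fintype α]
    (p pr : α → ℝ) (X : α → ℝ)
    (hp : ∀ s, 0 ≤ p s) (hpr : ∀ s, 0 ≤ pr s)
    (hps : ∑ s : α, p s = 1) (hprs : ∑ s : α, pr s = 1)
    (habs : ∀ s, pr s = 0 → p s = 0)
    (hX : ∀ s, 0 ≤ X s) :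
    ∑ s : α, |p s - pr s| * X s
      ≤ Real.sqrt (∑ s : α, p s * Real.log (p s / pr s))
        * Real.sqrt ((4 / 3) * (∑ s : α, pr s * X s ^ 2)
            + (2 / 3) * (∑ s : α, p s * X s ^ 2)) :=
  stmt13_general p pr X hp hpr hps hprs habs
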